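/- arXiv:0803.2076 — 2 statements merged into one kernel-verified Lean document; each statement's English description precedes it below -/
import Mathlib

section
/- For every w ∈ W⁰ one has ℓ(τ₀·w) = ℓ(τ₀) − ℓ(w). -/
/-!
Write `z = w • 0 + ρ = vρ + pλ` for `w = t_λ v ∈ W⁰`. Then `1 ≤ ⟨z, β∨⟩ ≤ p` on simple roots,
hence `⟨ρ, γ∨⟩ ≤ ⟨z, γ∨⟩ ≤ p ⟨ρ, γ∨⟩` for every positive root `γ`, because `γ∨` is a
nonnegative combination of simple coroots (computed with a `W`-invariant inner product). For
`α > 0` we have `⟨z, (vα)∨⟩ = ⟨ρ, α∨⟩ + p ⟨λ, (vα)∨⟩` with `0 < ⟨ρ, α∨⟩ < p`, so these bounds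
pin the integer `⟨λ, (vα)∨⟩` down to `[0, r - 1]` if `vα > 0` and to `[-r, -1]` if `vα < 0`,
where `r = ⟨ρ, (±vα)∨⟩` (an integer, by a parity argument). On these ranges the absolute values
in the Iwahori–Matsumoto formula open up without cancellation, and the contributions of `α` to
`ℓ(τ₀ w)` and to `ℓ(w)` add up to `r - 1`. Since `α ↦ ±vα` permutes the positive roots, the sum
over `α` is `∑_{β > 0} (⟨ρ, β∨⟩ - 1) = ℓ(τ₀)`.
-/

/-- A package of data and axioms encoding a finite reduced crystallographic root system
`R` spanning a real vector space `E`, with a chosen system of positive roots `Rpos`,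
simple roots `simples`, coroot pairing `coroot` (so `coroot α x = ⟨x, α∨⟩`),
Weyl group `W` (as a group of linear automorphisms of `E`), longest element `w0`,
half-sum of positive roots `rho`, and an integer `p` with `⟨ρ, α∨⟩ < p` for all
positive roots `α` (i.e. `p` is bigger than the Coxeter number). -/
structure RootSystemData (E : Type) [AddCommGroup E] [Module ℝ E] : Type where
  R : Finset E
  Rpos : Finset E
  simples : Finset E
  coroot : E → (E →ₗ[ℝ] ℝ)
  W : Subgroup (E ≃ₗ[ℝ] E)
  w0 : E ≃ₗ[ℝ] E
  rho : E
  p : ℤ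
  finiteDim : FiniteDimensional ℝ E
  span_eq : Submodule.span ℝ (R : Set E) = ⊤
  zero_not_mem : (0 : E) ∉ R
  reduced : ∀ α ∈ R, ∀ c : ℝ, c • α ∈ R → c = 1 ∨ c = -1
  rpos_subset : Rpos ⊆ R
  neg_mem : ∀ α ∈ R, -α ∈ R
  pos_iff : ∀ α ∈ R, (α ∈ Rpos ↔ -α ∉ Rpos)
  simples_subset : simples ⊆ Rpos
  pos_sum_simples : ∀ α ∈ Rpos, ∃ c : E → ℕ, α = ∑ β ∈ simples, (c β : ℝ) • β
  coroot_self : ∀ α ∈ R, coroot α α = 2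
  crystallographic : ∀ α ∈ R, ∀ β ∈ R, ∃ n : ℤ, coroot α β = (n : ℝ)
  reflection_mem : ∀ α ∈ R, ∀ β ∈ R, β - coroot α β • α ∈ R
  W_gen : W = Subgroup.closure
    {s : E ≃ₗ[ℝ] E | ∃ α ∈ R, ∀ x : E, s x = x - coroot α x • α}
  W_root_stable : ∀ v ∈ W, ∀ α ∈ R, v α ∈ R
  W_equivariant : ∀ v ∈ W, ∀ α x : E, coroot (v α) (v x) = coroot α x
  w0_mem : w0 ∈ W
  w0_neg : ∀ α ∈ Rpos, -(w0 α) ∈ Rpos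
  w0_sq : w0 * w0 = 1
  nondeg : ∀ x : E, (∀ α ∈ R, coroot α x = 0) → x = 0
  rho_def : (2 : ℝ) • rho = ∑ α ∈ Rpos, α
  rho_simple : ∀ α ∈ simples, coroot α rho = 1
  p_pos : 0 < p
  p_gt : ∀ α ∈ Rpos, coroot α rho < (p : ℝ)

namespace RootSystemData

variable {E : Type} [AddCommGroup E] [Module ℝ E] [DecidableEq E] (D : RootSystemData E)

/-- Membership in the weight lattice `X = {λ ∈ E : ⟨λ, α∨⟩ ∈ ℤ for all α ∈ R}`. -/
def IsWeight (x : E) : Prop := ∀ α ∈ D.R, ∃ n : ℤ, D.coroot α x = (n : ℝ)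

/-- A weight `μ` is dominant if `⟨μ, α∨⟩ ≥ 0` for all simple roots `α`. -/
def IsDominant (μ : E) : Prop := ∀ α ∈ D.simples, 0 ≤ D.coroot α μ

/-- A weight `μ` is restricted if `⟨μ, α∨⟩ ≤ p - 1` for all simple roots `α`. -/
def IsRestricted (μ : E) : Prop := ∀ α ∈ D.simples, D.coroot α μ ≤ (D.p : ℝ) - 1

/-- The value of the dot-action of the element `t_lam · v` of the extended affine Weyl
group `W'_aff = W ⋉ X` on the weight `0`:  `(t_lam · v) • 0 = v(0 + ρ) - ρ + p • lam`. -/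
def dotZero (v : E ≃ₗ[ℝ] E) (lam : E) : E := v D.rho - D.rho + (D.p : ℝ) • lam

/-- The condition `t_lam · v ∈ W⁰`, i.e. `(t_lam · v) • 0` is restricted and dominant
(together with the requirements `v ∈ W`, `lam ∈ X`). -/
def InW0 (v : E ≃ₗ[ℝ] E) (lam : E) : Prop :=
  v ∈ D.W ∧ D.IsWeight lam ∧ D.IsDominant (D.dotZero v lam) ∧ D.IsRestricted (D.dotZero v lam)

/-- The Iwahori–Matsumoto length of the element `w · t_x` of `W'_aff`:
`ℓ(w·t_x) = Σ_{α ∈ R⁺ ∩ w⁻¹(R⁺)} |⟨x,α∨⟩| + Σ_{α ∈ R⁺ ∩ w⁻¹(R⁻)} |1 + ⟨x,α∨⟩|`. -/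
noncomputable def len (w : E ≃ₗ[ℝ] E) (x : E) : ℝ :=
  (∑ α ∈ D.Rpos.filter (fun α => w α ∈ D.Rpos), |D.coroot α x|) +
    (∑ α ∈ D.Rpos.filter (fun α => -(w α) ∈ D.Rpos), |1 + D.coroot α x|)

/-- The length of `t_lam · v = v · t_{v⁻¹ lam}`. -/
noncomputable def lenT (v : E ≃ₗ[ℝ] E) (lam : E) : ℝ := D.len v (v.symm lam)

end RootSystemData

section General

variable {E : Type*} [AddCommGroup E] [Module ℝ E]

theorem Subgroup.finite_of_mapsTo_of_span_eq_top {G : Subgroup (E ≃ₗ[ℝ] E)} {S : Set E}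
    (hS : S.Finite) (hspan : Submodule.span ℝ S = ⊤) (hG : ∀ g ∈ G, Set.MapsTo g S S) :
    Finite G := by
  have := hS.to_subtype
  refine Finite.of_injective (fun g : G => (hG g g.2).restrict) fun g₁ g₂ hg => ?_
  have hlin : (g₁ : E →ₗ[ℝ] E) = g₂ :=
    LinearMap.ext_on hspan fun x hx => congrArg Subtype.val (congrFun hg ⟨x, hx⟩)
  exact Subtype.ext (LinearEquiv.toLinearMap_injective hlin)

/-- Averaging a Euclidean inner product over `G` (Weyl's unitary trick). -/
theorem exists_posDef_bilin_invariant [FiniteDimensional ℝ E] (G : Subgroup (E ≃ₗ[ℝ] E))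
    [Finite G] : ∃ B : E →ₗ[ℝ] E →ₗ[ℝ] ℝ,
      (∀ x, x ≠ 0 → 0 < B x x) ∧ ∀ g ∈ G, ∀ x y, B (g x) (g y) = B x y := by
  cases nonempty_fintype G
  let e : E ≃ₗ[ℝ] EuclideanSpace ℝ (Fin (Module.finrank ℝ E)) :=
    (Module.finBasis ℝ E).equivFun.trans (WithLp.linearEquiv 2 ℝ _).symm
  let b : G → E →ₗ[ℝ] E →ₗ[ℝ] ℝ := fun g =>
    (innerₗ _).compl₁₂ (e.toLinearMap ∘ₗ (g : E →ₗ[ℝ] E)) (e.toLinearMap ∘ₗ (g : E →ₗ[ℝ] E))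
  have hb : ∀ (g : G) x y,
      b g x y = inner ℝ (e ((g : E ≃ₗ[ℝ] E) x)) (e ((g : E ≃ₗ[ℝ] E) y)) :=
    fun _ _ _ => rfl
  refine ⟨∑ g, b g, fun x hx => ?_, fun g hg x y => ?_⟩
  · simp only [LinearMap.sum_apply, hb]
    exact Finset.sum_pos (fun g _ => real_inner_self_pos.2 (by simpa using hx))
      Finset.univ_nonempty
  · simp only [LinearMap.sum_apply, hb]
    refine Fintype.sum_equiv (Equiv.mulRight ⟨g, hg⟩) _ _ fun k => ?_
    simp only [Equiv.coe_mulRight, Subgroup.coe_mul, LinearEquiv.mul_apply]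

theorem Finset.even_sum_of_involution {ι : Type*} {s : Finset ι} {f : ι → ℤ} (σ : ι → ι)
    (hσ : ∀ i ∈ s, σ i ∈ s) (hσσ : ∀ i ∈ s, σ (σ i) = i)
    (hpair : ∀ i ∈ s, Even (f i + f (σ i))) (hfix : ∀ i ∈ s, σ i = i → Even (f i)) :
    Even (∑ i ∈ s, f i) := by
  rw [← ZMod.intCast_eq_zero_iff_even, Int.cast_sum]
  refine Finset.sum_involution (fun i _ => σ i) (fun i hi => ?_) (fun i hi hf hfix' => ?_) hσ hσσ
  · rw [← Int.cast_add, ZMod.intCast_eq_zero_iff_even]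
    exact hpair i hi
  · exact hf (ZMod.intCast_eq_zero_iff_even.2 (hfix i hi hfix'))

theorem Int.nonneg_and_le_sub_one_of_le_add_mul {p a : ℝ} {n r : ℤ} (ha : 0 < a) (hap : a < p)
    (hr : 0 ≤ r) (h₁ : r ≤ a + p * n) (h₂ : a + p * n ≤ p * r) : 0 ≤ n ∧ n ≤ r - 1 := by
  have hp : 0 < p := ha.trans hap
  have hr' : (0 : ℝ) ≤ r := by exact_mod_cast hr
  have hlow : (-1 : ℝ) < n := by nlinarith
  have hup : (n : ℝ) < r := by nlinarith
  have hlow' : (-1 : ℤ) < n := by exact_mod_cast hlow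
  have hup' : n < r := by exact_mod_cast hup
  omega

end General

namespace RootSystemData

variable {E : Type} [AddCommGroup E] [Module ℝ E] (D : RootSystemData E)

theorem finite_W : Finite D.W :=
  Subgroup.finite_of_mapsTo_of_span_eq_top D.R.finite_toSet D.span_eq
    fun g hg α hα => D.W_root_stable g hg α hα

theorem reflection_mem_W {α : E} (hα : α ∈ D.R) :
    Module.reflection (D.coroot_self α hα) ∈ D.W := by
  rw [D.W_gen]
  exact Subgroup.subset_closure ⟨α, hα, fun x => Module.reflection_apply x (D.coroot_self α hα)⟩

theorem exists_coroot_eq_div : ∃ B : E →ₗ[ℝ] E →ₗ[ℝ] ℝ, (∀ α ∈ D.R, 0 < B α α) ∧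
    ∀ α ∈ D.R, ∀ x, D.coroot α x = 2 * B x α / B α α := by
  have := D.finiteDim
  have := D.finite_W
  obtain ⟨B, hpos, hinv⟩ := exists_posDef_bilin_invariant D.W
  have hαpos : ∀ α ∈ D.R, 0 < B α α := fun α hα =>
    hpos α fun h => D.zero_not_mem (h ▸ hα)
  refine ⟨B, hαpos, fun α hα x => ?_⟩
  have hs := hinv _ (D.reflection_mem_W hα) x α
  simp only [Module.reflection_apply, D.coroot_self α hα, map_sub, map_smul,
    LinearMap.sub_apply, LinearMap.smul_apply, smul_eq_mul] at hs
  rw [eq_div_iff (hαpos α hα).ne']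
  linarith

theorem coroot_neg {α : E} (hα : α ∈ D.R) (x : E) : D.coroot (-α) x = -D.coroot α x := by
  obtain ⟨B, -, hB⟩ := D.exists_coroot_eq_div
  rw [hB _ (D.neg_mem α hα), hB α hα]
  simp only [map_neg, LinearMap.neg_apply, neg_neg]
  ring

theorem exists_coroot_eq_sum_simples {α : E} (hα : α ∈ D.Rpos) :
    ∃ c : E → ℝ, (∀ β ∈ D.simples, 0 ≤ c β) ∧
      ∀ x, D.coroot α x = ∑ β ∈ D.simples, c β * D.coroot β x := by
  obtain ⟨B, hBpos, hB⟩ := D.exists_coroot_eq_div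
  obtain ⟨k, hk⟩ := D.pos_sum_simples α hα
  have hαR := D.rpos_subset hα
  have hsR : ∀ β ∈ D.simples, β ∈ D.R := fun β hβ => D.rpos_subset (D.simples_subset hβ)
  refine ⟨fun β => k β * B β β / B α α, fun β hβ =>
    div_nonneg (mul_nonneg (Nat.cast_nonneg _) (hBpos β (hsR β hβ)).le) (hBpos α hαR).le,
    fun x => ?_⟩
  have hBx : B x α = ∑ β ∈ D.simples, k β * B x β := by
    conv_lhs => rw [hk]
    simp only [map_sum, map_smul, smul_eq_mul]
  rw [hB α hαR, hBx, Finset.mul_sum, Finset.sum_div]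
  refine Finset.sum_congr rfl fun β hβ => ?_
  rw [hB β (hsR β hβ)]
  have := (hBpos β (hsR β hβ)).ne'
  field_simp

theorem coroot_rho_eq_sum {α : E} {c : E → ℝ}
    (hc : ∀ x, D.coroot α x = ∑ β ∈ D.simples, c β * D.coroot β x) :
    D.coroot α D.rho = ∑ β ∈ D.simples, c β := by
  rw [hc]
  exact Finset.sum_congr rfl fun β hβ => by rw [D.rho_simple β hβ, mul_one]

theorem coroot_rho_pos {α : E} (hα : α ∈ D.Rpos) : 0 < D.coroot α D.rho := by
  obtain ⟨c, hc0, hc⟩ := D.exists_coroot_eq_sum_simples hα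
  rw [D.coroot_rho_eq_sum hc]
  refine (Finset.sum_nonneg hc0).lt_of_ne fun hsum => ?_
  have hzero : ∀ β ∈ D.simples, c β = 0 := (Finset.sum_eq_zero_iff_of_nonneg hc0).1 hsum.symm
  have h2 := D.coroot_self α (D.rpos_subset hα)
  rw [hc, Finset.sum_eq_zero fun β hβ => by rw [hzero β hβ, zero_mul]] at h2
  norm_num at h2

theorem mul_coroot_rho_le {α : E} (hα : α ∈ D.Rpos) {x : E} {m : ℝ}
    (hm : ∀ β ∈ D.simples, m ≤ D.coroot β x) : m * D.coroot α D.rho ≤ D.coroot α x := by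
  obtain ⟨c, hc0, hc⟩ := D.exists_coroot_eq_sum_simples hα
  rw [D.coroot_rho_eq_sum hc, hc, Finset.mul_sum]
  exact Finset.sum_le_sum fun β hβ => by
    rw [mul_comm]; exact mul_le_mul_of_nonneg_left (hm β hβ) (hc0 β hβ)

theorem coroot_le_mul_coroot_rho {α : E} (hα : α ∈ D.Rpos) {x : E} {M : ℝ}
    (hM : ∀ β ∈ D.simples, D.coroot β x ≤ M) : D.coroot α x ≤ M * D.coroot α D.rho := by
  obtain ⟨c, hc0, hc⟩ := D.exists_coroot_eq_sum_simples hα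
  rw [D.coroot_rho_eq_sum hc, hc, Finset.mul_sum]
  exact Finset.sum_le_sum fun β hβ => by
    rw [mul_comm M]; exact mul_le_mul_of_nonneg_left (hM β hβ) (hc0 β hβ)

theorem coroot_eq_zero_of_reflection_eq {α β : E} (hα : α ∈ D.R)
    (h : Module.reflection (D.coroot_self α hα) β = β) : D.coroot α β = 0 := by
  rw [Module.reflection_apply, sub_eq_self, smul_eq_zero] at h
  exact h.resolve_right fun h0 => D.zero_not_mem (h0 ▸ hα)

theorem coroot_eq_two_or_neg_two_of_reflection_eq_neg {α β : E} (hα : α ∈ D.R) (hβ : β ∈ D.R)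
    (h : Module.reflection (D.coroot_self α hα) β = -β) :
    D.coroot α β = 2 ∨ D.coroot α β = -2 := by
  rw [Module.reflection_apply] at h
  have hβα : (D.coroot α β / 2) • α = β := by
    rw [div_eq_inv_mul, mul_smul]
    linear_combination (norm := module) (-(2:ℝ)⁻¹) • h
  rcases D.reduced α hα _ (hβα ▸ hβ) with h1 | h1
  · left; linarith
  · right; linarith

theorem neg_mem_Rpos_iff {γ : E} (hγ : γ ∈ D.R) : -γ ∈ D.Rpos ↔ γ ∉ D.Rpos := by
  rw [D.pos_iff γ hγ, not_not]

section Positive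

variable [DecidableEq E]

def posRoot (γ : E) : E := if γ ∈ D.Rpos then γ else -γ

theorem posRoot_mem {γ : E} (hγ : γ ∈ D.R) : D.posRoot γ ∈ D.Rpos := by
  unfold posRoot
  split_ifs with h
  exacts [h, (D.neg_mem_Rpos_iff hγ).2 h]

theorem posRoot_of_mem {γ : E} (hγ : γ ∈ D.Rpos) : D.posRoot γ = γ := if_pos hγ

theorem posRoot_of_not_mem {γ : E} (hγ : γ ∉ D.Rpos) : D.posRoot γ = -γ := if_neg hγ

theorem posRoot_neg {γ : E} (hγ : γ ∈ D.R) : D.posRoot (-γ) = D.posRoot γ := by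
  by_cases h : γ ∈ D.Rpos
  · rw [D.posRoot_of_mem h, D.posRoot_of_not_mem ((D.pos_iff γ hγ).1 h), neg_neg]
  · rw [D.posRoot_of_mem ((D.neg_mem_Rpos_iff hγ).2 h), D.posRoot_of_not_mem h]

theorem posRoot_map_posRoot (f : E ≃ₗ[ℝ] E) {γ : E} (hfγ : f γ ∈ D.R) :
    D.posRoot (f (D.posRoot γ)) = D.posRoot (f γ) := by
  by_cases h : γ ∈ D.Rpos
  · rw [D.posRoot_of_mem h]
  · rw [D.posRoot_of_not_mem h, map_neg, D.posRoot_neg hfγ]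

theorem sum_posRoot_comp {M : Type*} [AddCommMonoid M] {v : E ≃ₗ[ℝ] E} (hv : v ∈ D.W)
    (f : E → M) : ∑ α ∈ D.Rpos, f (D.posRoot (v α)) = ∑ α ∈ D.Rpos, f α := by
  have hv' : v.symm ∈ D.W := D.W.inv_mem hv
  have hvR : ∀ α ∈ D.Rpos, v α ∈ D.R := fun α hα => D.W_root_stable v hv α (D.rpos_subset hα)
  have hv'R : ∀ α ∈ D.Rpos, v.symm α ∈ D.R := fun α hα =>
    D.W_root_stable _ hv' α (D.rpos_subset hα)
  refine Finset.sum_nbij' (fun α => D.posRoot (v α)) (fun β => D.posRoot (v.symm β))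
    (fun α hα => D.posRoot_mem (hvR α hα)) (fun β hβ => D.posRoot_mem (hv'R β hβ))
    (fun α hα => ?_) (fun β hβ => ?_) fun _ _ => rfl
  · rw [D.posRoot_map_posRoot v.symm (by simpa using D.rpos_subset hα), v.symm_apply_apply,
      D.posRoot_of_mem hα]
  · rw [D.posRoot_map_posRoot v (by simpa using D.rpos_subset hβ), v.apply_symm_apply,
      D.posRoot_of_mem hβ]

theorem coroot_posRoot_reflection {α : E} (hα : α ∈ D.R) (β : E) :
    D.coroot α (D.posRoot (Module.reflection (D.coroot_self α hα) β)) = -D.coroot α β ∨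
      D.coroot α (D.posRoot (Module.reflection (D.coroot_self α hα) β)) = D.coroot α β := by
  have hs : D.coroot α (Module.reflection (D.coroot_self α hα) β) = -D.coroot α β := by
    rw [Module.reflection_apply, map_sub, map_smul, D.coroot_self α hα, smul_eq_mul]
    ring
  by_cases h : Module.reflection (D.coroot_self α hα) β ∈ D.Rpos
  · exact Or.inl (by rw [D.posRoot_of_mem h, hs])
  · exact Or.inr (by rw [D.posRoot_of_not_mem h, map_neg, hs, neg_neg])

theorem coroot_mem_of_posRoot_reflection_eq {α β : E} (hα : α ∈ D.R) (hβ : β ∈ D.R)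
    (h : D.posRoot (Module.reflection (D.coroot_self α hα) β) = β) :
    D.coroot α β = 0 ∨ D.coroot α β = 2 ∨ D.coroot α β = -2 := by
  by_cases hs : Module.reflection (D.coroot_self α hα) β ∈ D.Rpos
  · rw [D.posRoot_of_mem hs] at h
    exact Or.inl (D.coroot_eq_zero_of_reflection_eq hα h)
  · rw [D.posRoot_of_not_mem hs, neg_eq_iff_eq_neg] at h
    exact Or.inr (D.coroot_eq_two_or_neg_two_of_reflection_eq_neg hα hβ h)

end Positive

/-- `ρ` is a weight: the reflection `s_α` induces an involution `β ↦ ±s_α β` of the positive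
roots which preserves `⟨β, α∨⟩` up to sign and whose fixed points have `⟨β, α∨⟩ ∈ {0, ±2}`,
so `⟨2ρ, α∨⟩ = ∑_{β > 0} ⟨β, α∨⟩` is even. -/
theorem exists_coroot_rho_eq_int {α : E} (hα : α ∈ D.R) : ∃ k : ℤ, D.coroot α D.rho = k := by
  classical
  choose! f hf using D.crystallographic α hα
  let s := Module.reflection (D.coroot_self α hα)
  have hsR : ∀ β ∈ D.R, s β ∈ D.R := fun β hβ => D.W_root_stable _ (D.reflection_mem_W hα) β hβ
  have heven : Even (∑ β ∈ D.Rpos, f β) := by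
    refine Finset.even_sum_of_involution (fun β => D.posRoot (s β))
      (fun β hβ => D.posRoot_mem (hsR β (D.rpos_subset hβ))) (fun β hβ => ?_)
      (fun β hβ => ?_) (fun β hβ hfix => ?_)
    · rw [D.posRoot_map_posRoot s (hsR _ (hsR β (D.rpos_subset hβ))),
        Module.involutive_reflection, D.posRoot_of_mem hβ]
    · have hσR := D.rpos_subset (D.posRoot_mem (hsR β (D.rpos_subset hβ)))
      rcases D.coroot_posRoot_reflection hα β with h | h <;>
        rw [hf _ hσR, hf β (D.rpos_subset hβ)] at h <;> norm_cast at h <;> rw [h]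
      exacts [⟨0, by ring⟩, ⟨f β, rfl⟩]
    · rcases D.coroot_mem_of_posRoot_reflection_eq hα (D.rpos_subset hβ) hfix with h | h | h <;>
        rw [hf β (D.rpos_subset hβ)] at h <;> norm_cast at h <;> rw [h] <;> decide
  obtain ⟨k, hk⟩ := heven
  refine ⟨k, ?_⟩
  have h2ρ := congrArg (D.coroot α) D.rho_def
  rw [map_smul, map_sum, smul_eq_mul, Finset.sum_congr rfl fun β hβ => hf β (D.rpos_subset hβ),
    ← Int.cast_sum, hk] at h2ρ
  push_cast at h2ρ
  linarith

theorem one_le_coroot_rho {α : E} (hα : α ∈ D.Rpos) : 1 ≤ D.coroot α D.rho := by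
  obtain ⟨k, hk⟩ := D.exists_coroot_rho_eq_int (D.rpos_subset hα)
  have hpos := D.coroot_rho_pos hα
  rw [hk] at hpos ⊢
  exact_mod_cast (show (0 : ℤ) < k by exact_mod_cast hpos)

theorem coroot_symm_apply {v : E ≃ₗ[ℝ] E} (hv : v ∈ D.W) (α x : E) :
    D.coroot α (v.symm x) = D.coroot (v α) x := by
  rw [← D.W_equivariant v hv α, v.apply_symm_apply]

theorem w0_w0 (x : E) : D.w0 (D.w0 x) = x :=
  congrArg (· x) D.w0_sq

theorem coroot_w0 (γ x : E) : D.coroot (D.w0 γ) x = D.coroot γ (D.w0 x) := by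
  rw [← D.W_equivariant D.w0 D.w0_mem γ (D.w0 x), D.w0_w0]

theorem w0_mem_Rpos_iff {γ : E} (hγ : γ ∈ D.R) : D.w0 γ ∈ D.Rpos ↔ γ ∉ D.Rpos := by
  refine ⟨fun h hγ' => (D.pos_iff _ (D.W_root_stable _ D.w0_mem γ hγ)).1 h (D.w0_neg γ hγ'),
    fun h => ?_⟩
  simpa using D.w0_neg (-γ) ((D.neg_mem_Rpos_iff hγ).2 h)

theorem w0_not_mem_Rpos {α : E} (hα : α ∈ D.Rpos) : D.w0 α ∉ D.Rpos :=
  fun h => (D.w0_mem_Rpos_iff (D.rpos_subset hα)).1 h hα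

theorem w0_rho : D.w0 D.rho = -D.rho := by
  classical
  have hsum : ∑ α ∈ D.Rpos, D.w0 α = -∑ α ∈ D.Rpos, D.posRoot (D.w0 α) := by
    rw [← Finset.sum_neg_distrib]
    refine Finset.sum_congr rfl fun α hα => ?_
    rw [D.posRoot_of_not_mem (D.w0_not_mem_Rpos hα), neg_neg]
  have hperm : ∑ α ∈ D.Rpos, D.posRoot (D.w0 α) = ∑ α ∈ D.Rpos, α :=
    D.sum_posRoot_comp D.w0_mem id
  rw [hperm] at hsum
  have h2 : (2 : ℝ) • D.w0 D.rho = (2 : ℝ) • -D.rho := by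
    rw [← map_smul, D.rho_def, map_sum, hsum, smul_neg, D.rho_def]
  exact smul_right_injective E two_ne_zero h2

section Length

variable [DecidableEq E]

theorem lenT_eq_sum {v : E ≃ₗ[ℝ] E} (hv : v ∈ D.W) (lam : E) :
    D.lenT v lam = ∑ α ∈ D.Rpos,
      if v α ∈ D.Rpos then |D.coroot (v α) lam| else |1 + D.coroot (v α) lam| := by
  have hvR : ∀ α ∈ D.Rpos, v α ∈ D.R := fun α hα => D.W_root_stable v hv α (D.rpos_subset hα)
  rw [Finset.sum_ite, lenT, len,
    Finset.filter_congr fun α hα => D.neg_mem_Rpos_iff (hvR α hα)]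
  simp only [D.coroot_symm_apply hv]

theorem lenT_w0_mul {v : E ≃ₗ[ℝ] E} (hv : v ∈ D.W) (lam : E) :
    D.lenT (D.w0 * v) (D.rho + D.w0 lam) = ∑ α ∈ D.Rpos,
      if v α ∈ D.Rpos then |1 + D.coroot (v α) (lam - D.rho)|
      else |D.coroot (v α) (lam - D.rho)| := by
  rw [D.lenT_eq_sum (D.W.mul_mem D.w0_mem hv)]
  refine Finset.sum_congr rfl fun α hα => ?_
  have harg : D.w0 (D.rho + D.w0 lam) = lam - D.rho := by
    rw [map_add, D.w0_rho, D.w0_w0]; abel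
  rw [LinearEquiv.mul_apply, D.coroot_w0, harg,
    if_congr (D.w0_mem_Rpos_iff (D.W_root_stable v hv α (D.rpos_subset hα))) rfl rfl, ite_not]

theorem lenT_w0_rho : D.lenT D.w0 D.rho = ∑ α ∈ D.Rpos, (D.coroot α D.rho - 1) := by
  rw [D.lenT_eq_sum D.w0_mem]
  refine Finset.sum_congr rfl fun α hα => ?_
  rw [if_neg (D.w0_not_mem_Rpos hα), D.coroot_w0, D.w0_rho, map_neg,
    abs_of_nonpos (by linarith [D.one_le_coroot_rho hα])]
  ring

end Length

section W0

variable {D} {v : E ≃ₗ[ℝ] E} {lam : E}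

theorem coroot_dotZero_add_rho (hv : v ∈ D.W) (α : E) :
    D.coroot (v α) (D.dotZero v lam + D.rho) = D.coroot α D.rho + D.p * D.coroot (v α) lam := by
  have hz : D.dotZero v lam + D.rho = v D.rho + (D.p : ℝ) • lam := by
    rw [dotZero]; abel
  rw [hz, map_add, map_smul, D.W_equivariant v hv, smul_eq_mul]

theorem InW0.coroot_rho_le_and_le_mul (h : D.InW0 v lam) {δ : E} (hδ : δ ∈ D.Rpos) :
    D.coroot δ D.rho ≤ D.coroot δ (D.dotZero v lam + D.rho) ∧
      D.coroot δ (D.dotZero v lam + D.rho) ≤ D.p * D.coroot δ D.rho := by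
  obtain ⟨-, -, hdom, hres⟩ := h
  have hsimple : ∀ β ∈ D.simples,
      D.coroot β (D.dotZero v lam + D.rho) = D.coroot β (D.dotZero v lam) + 1 :=
    fun β hβ => by rw [map_add, D.rho_simple β hβ]
  constructor
  · rw [← one_mul (D.coroot δ D.rho)]
    exact D.mul_coroot_rho_le hδ fun β hβ => by rw [hsimple β hβ]; linarith [hdom β hβ]
  · exact D.coroot_le_mul_coroot_rho hδ fun β hβ => by
      rw [hsimple β hβ]; linarith [hres β hβ]

theorem InW0.coroot_bounds_of_mem (h : D.InW0 v lam) {α : E} (hα : α ∈ D.Rpos)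
    (hvα : v α ∈ D.Rpos) :
    0 ≤ D.coroot (v α) lam ∧ D.coroot (v α) lam ≤ D.coroot (v α) D.rho - 1 := by
  obtain ⟨n, hn⟩ := h.2.1 (v α) (D.rpos_subset hvα)
  obtain ⟨r, hr⟩ := D.exists_coroot_rho_eq_int (D.rpos_subset hvα)
  have hr0 : 0 ≤ r := by exact_mod_cast hr ▸ (D.coroot_rho_pos hvα).le
  have hb := h.coroot_rho_le_and_le_mul hvα
  rw [coroot_dotZero_add_rho h.1, hn, hr] at hb
  obtain ⟨h0, h1⟩ := Int.nonneg_and_le_sub_one_of_le_add_mul (D.coroot_rho_pos hα)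
    (D.p_gt α hα) hr0 hb.1 hb.2
  rw [hn, hr]
  exact ⟨by exact_mod_cast h0, by exact_mod_cast h1⟩

theorem InW0.coroot_bounds_of_not_mem (h : D.InW0 v lam) {α : E} (hα : α ∈ D.Rpos)
    (hvα : v α ∉ D.Rpos) :
    D.coroot (v α) D.rho ≤ D.coroot (v α) lam ∧ D.coroot (v α) lam ≤ -1 := by
  have hvαR := D.W_root_stable v h.1 α (D.rpos_subset hα)
  have hδ := (D.neg_mem_Rpos_iff hvαR).2 hvα
  obtain ⟨n, hn⟩ := h.2.1 (v α) hvαR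
  obtain ⟨r, hr⟩ := D.exists_coroot_rho_eq_int (D.rpos_subset hδ)
  have hr0 : 0 ≤ r := by exact_mod_cast hr ▸ (D.coroot_rho_pos hδ).le
  have hb := h.coroot_rho_le_and_le_mul hδ
  rw [D.coroot_neg hvαR (D.dotZero v lam + D.rho), coroot_dotZero_add_rho h.1, hn, hr] at hb
  have ha := D.coroot_rho_pos hα
  have hap := D.p_gt α hα
  -- `p - ⟨ρ, α∨⟩ + p (-n - 1) = -(⟨ρ, α∨⟩ + p n)` puts us back in the positive case.
  obtain ⟨h0, h1⟩ := Int.nonneg_and_le_sub_one_of_le_add_mul (n := -n - 1) (sub_pos.2 hap)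
    (sub_lt_self _ ha) hr0 (by push_cast; linarith) (by push_cast; linarith)
  rw [D.coroot_neg hvαR] at hr
  rw [hn, neg_eq_iff_eq_neg.1 hr]
  exact ⟨by exact_mod_cast (by omega : -r ≤ n), by exact_mod_cast (by omega : n ≤ -1)⟩

theorem InW0.abs_add_abs_eq [DecidableEq E] (h : D.InW0 v lam) {α : E} (hα : α ∈ D.Rpos) :
    ((if v α ∈ D.Rpos then |1 + D.coroot (v α) (lam - D.rho)|
      else |D.coroot (v α) (lam - D.rho)|) +
      if v α ∈ D.Rpos then |D.coroot (v α) lam| else |1 + D.coroot (v α) lam|) =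
      D.coroot (D.posRoot (v α)) D.rho - 1 := by
  rw [map_sub]
  by_cases hvα : v α ∈ D.Rpos
  · obtain ⟨h0, h1⟩ := h.coroot_bounds_of_mem hα hvα
    rw [if_pos hvα, if_pos hvα, D.posRoot_of_mem hvα, abs_of_nonpos (by linarith),
      abs_of_nonneg h0]
    ring
  · obtain ⟨h0, h1⟩ := h.coroot_bounds_of_not_mem hα hvα
    rw [if_neg hvα, if_neg hvα, D.posRoot_of_not_mem hvα,
      D.coroot_neg (D.W_root_stable v h.1 α (D.rpos_subset hα)), abs_of_nonneg (by linarith),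
      abs_of_nonpos (by linarith)]
    ring

end W0

end RootSystemData

/-- `w = t_lam · v` is encoded as the pair `(v, lam)`, so that
`τ₀ · w = t_{ρ + w₀ lam} · (w₀ v)`. -/
theorem statement4 {E : Type} [AddCommGroup E] [Module ℝ E] [DecidableEq E]
    (D : RootSystemData E) (v : E ≃ₗ[ℝ] E) (lam : E) (h : D.InW0 v lam) :
    D.lenT (D.w0 * v) (D.rho + D.w0 lam) = D.lenT D.w0 D.rho - D.lenT v lam := by
  have hsum : D.lenT (D.w0 * v) (D.rho + D.w0 lam) + D.lenT v lam = D.lenT D.w0 D.rho := by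
    rw [D.lenT_w0_mul h.1, D.lenT_eq_sum h.1, ← Finset.sum_add_distrib,
      Finset.sum_congr rfl fun α hα => h.abs_add_abs_eq hα,
      D.sum_posRoot_comp h.1 fun β => D.coroot β D.rho - 1, D.lenT_w0_rho]
  linarith
end

section
/- There exists k ≥ 1 such that (rad^gr(A))^k ⊆ V·A. -/
/-!
Let `I = V·A` and `J = rad^gr(A)`. Since `V` is central and homogeneous, `I` is a homogeneous
two-sided ideal, and `A ⧸ I` is finite-dimensional because `A` is finite over `S(V)`. Hence the
descending chain `J^n + I` stabilises, and `W = J^n + I` satisfies `W = J W + I`. A graded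
Nakayama argument gives `W = I`: otherwise choose a homogeneous left ideal `P` with
`I ⊆ P ⊊ W`, maximal with this property. For homogeneous `w ∈ W \ P` the module `W / P` is
graded-simple and generated by `w`, so the colon ideal `(P : w)` is a maximal graded left ideal;
thus `J w ⊆ P`, whence `W = J W + I ⊆ P`, a contradiction.
-/

/-- A submodule `N` of a graded module `M = ⊕ₙ Mₙ` (with grading `gM : ℤ → Submodule k M`)
is *graded* (homogeneous) if it is generated, as an `A`-module, by its homogeneous
elements; equivalently (for modules with a decomposition) `N = ⊕ₙ (N ∩ Mₙ)`. -/
def IsGradedSubmodule {k A M : Type} [Semiring k] [Ring A]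
    [AddCommGroup M] [Module A M] [Module k M]
    (gM : ℤ → Submodule k M) (N : Submodule A M) : Prop :=
  N = Submodule.span A (⋃ n : ℤ, ((N : Set M) ∩ (gM n : Set M)))

/-- A *maximal graded submodule*: a proper graded submodule which is maximal among
proper graded submodules. -/
def IsMaxGradedSubmodule {k A M : Type} [Semiring k] [Ring A]
    [AddCommGroup M] [Module A M] [Module k M]
    (gM : ℤ → Submodule k M) (N : Submodule A M) : Prop :=
  IsGradedSubmodule gM N ∧ N ≠ ⊤ ∧
    ∀ N' : Submodule A M, IsGradedSubmodule gM N' → N < N' → N' = ⊤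

/-- The graded radical `rad^gr(M)` of a graded module: the intersection of all maximal
graded submodules. -/
def gradedRadicalMod {k A M : Type} [Semiring k] [Ring A]
    [AddCommGroup M] [Module A M] [Module k M]
    (gM : ℤ → Submodule k M) : Submodule A M :=
  sInf {N : Submodule A M | IsMaxGradedSubmodule gM N}

/-- The graded radical `rad^gr(A)` of a graded algebra: the intersection of all
maximal graded left ideals. -/
def gradedRadical {k A : Type} [Semiring k] [Ring A] [Module k A]
    (gA : ℤ → Submodule k A) : Ideal A :=
  gradedRadicalMod gA

namespace Ideal

theorem isTwoSided_span_of_subset_center {R : Type*} [Semiring R] {s : Set R}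
    (hs : s ⊆ Set.center R) : (span s).IsTwoSided := by
  refine ⟨@fun a b ha => ?_⟩
  induction ha using Submodule.span_induction with
  | mem x hx =>
    rw [← Semigroup.mem_center_iff.1 (hs hx) b]
    exact mul_mem_left _ b (subset_span hx)
  | zero => simp
  | add x y _ _ hx hy => rw [add_mul]; exact add_mem hx hy
  | smul a x _ hx => rw [smul_eq_mul, mul_assoc]; exact mul_mem_left _ a hx

theorem restrictScalars_pow_le {k A : Type*} [CommSemiring k] [Semiring A] [Algebra k A]
    (I : Ideal A) (n : ℕ) : I.restrictScalars k ^ n ≤ (I ^ n).restrictScalars k := by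
  induction n with
  | zero => simp [Submodule.pow_zero]
  | succ n ih =>
    rw [pow_succ, Submodule.pow_succ]
    exact Submodule.mul_le.2 fun x hx y hy => mul_mem_mul (ih hx) hy

end Ideal

namespace Submodule

theorem map_mkQ_le_map_mkQ_iff {R M : Type*} [Ring R] [AddCommGroup M] [Module R M]
    {p q q' : Submodule R M} (hq : p ≤ q) (hq' : p ≤ q') :
    q.map p.mkQ ≤ q'.map p.mkQ ↔ q ≤ q' := by
  rw [← comap_le_comap_iff_of_surjective p.mkQ_surjective, comap_map_mkQ, comap_map_mkQ,
    sup_eq_right.2 hq, sup_eq_right.2 hq']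

end Submodule

namespace Ideal.IsHomogeneous

variable {ι σ A : Type*} [DecidableEq ι] [Semiring A] [SetLike σ A] [AddSubmonoidClass σ A]
  {𝒜 : ι → σ}

theorem pow [AddMonoid ι] [GradedRing 𝒜] {I : Ideal A} (hI : I.IsHomogeneous 𝒜) (n : ℕ) :
    (I ^ n).IsHomogeneous 𝒜 := by
  classical
  induction n with
  | zero => rw [Submodule.pow_zero, one_eq_top]; exact top 𝒜
  | succ n ih =>
    rw [Submodule.pow_succ]
    intro i z hz
    refine Submodule.smul_induction_on hz (fun x hx y hy => ?_) (fun x y hx hy => ?_)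
    · rw [smul_eq_mul, DirectSum.decompose_mul, DirectSum.coe_mul_apply]
      exact Submodule.sum_mem _ fun _ _ => mul_mem_mul (ih _ hx) (hI _ hy)
    · rw [DirectSum.decompose_add, DirectSum.add_apply, AddMemClass.coe_add]
      exact add_mem hx hy

theorem comap_toSpanSingleton [AddRightCancelMonoid ι] [GradedRing 𝒜] {P : Ideal A}
    (hP : P.IsHomogeneous 𝒜) {w : A} {j : ι} (hw : w ∈ 𝒜 j) :
    (Submodule.comap (LinearMap.toSpanSingleton A A w) P).IsHomogeneous 𝒜 := by
  intro i a ha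
  simp only [Submodule.mem_comap, LinearMap.toSpanSingleton_apply, smul_eq_mul] at ha ⊢
  rw [← DirectSum.coe_decompose_mul_add_of_right_mem 𝒜 hw]
  exact hP _ ha

theorem map_toSpanSingleton [AddGroup ι] [GradedRing 𝒜] {N : Ideal A}
    (hN : N.IsHomogeneous 𝒜) {w : A} {j : ι} (hw : w ∈ 𝒜 j) :
    (Submodule.map (LinearMap.toSpanSingleton A A w) N).IsHomogeneous 𝒜 := by
  rintro i _ ⟨a, ha, rfl⟩
  simp only [LinearMap.toSpanSingleton_apply, smul_eq_mul]
  rw [← sub_add_cancel i j, DirectSum.coe_decompose_mul_add_of_right_mem 𝒜 hw]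
  exact ⟨_, hN _ ha, rfl⟩

end Ideal.IsHomogeneous

theorem Ideal.isHomogeneous_span_range {ι σ σV A V F : Type*} [DecidableEq ι] [AddMonoid ι]
    [Semiring A] [SetLike σ A] [AddSubmonoidClass σ A] {𝒜 : ι → σ} [GradedRing 𝒜]
    [AddCommMonoid V] [SetLike σV V] [AddSubmonoidClass σV V] {𝒱 : ι → σV}
    [DirectSum.Decomposition 𝒱] [FunLike F V A] [AddMonoidHomClass F V A] {φ : F}
    (hφ : ∀ i, ∀ v ∈ 𝒱 i, φ v ∈ 𝒜 i) : (span (Set.range φ)).IsHomogeneous 𝒜 := by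
  classical
  have hspan : span (Set.range φ) = span {a | ∃ i, ∃ v ∈ 𝒱 i, φ v = a} := by
    refine le_antisymm (span_le.2 ?_) (span_mono ?_)
    · rintro _ ⟨v, rfl⟩
      rw [← DirectSum.sum_support_decompose 𝒱 v, map_sum]
      refine Submodule.sum_mem _ fun i _ => subset_span ?_
      exact ⟨i, _, (DirectSum.decompose 𝒱 v i).2, rfl⟩
    · rintro _ ⟨i, v, -, rfl⟩
      exact ⟨v, rfl⟩
  rw [hspan]
  exact homogeneous_span 𝒜 _ fun _ ⟨i, v, hv, h⟩ => ⟨i, h ▸ hφ i v hv⟩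

section GradedRadical

variable {k A : Type} [Semiring k] [Ring A] [Module k A] {𝒜 : ℤ → Submodule k A} [GradedRing 𝒜]

open LinearMap (toSpanSingleton)

theorem isGradedSubmodule_iff_isHomogeneous {N : Ideal A} :
    IsGradedSubmodule 𝒜 N ↔ N.IsHomogeneous 𝒜 := by
  classical
  refine ⟨fun h => ?_, fun h => le_antisymm (fun a ha => ?_) ?_⟩
  · rw [IsGradedSubmodule] at h
    rw [h]
    refine Ideal.homogeneous_span 𝒜 _ fun x hx => ?_
    obtain ⟨n, -, hxn⟩ := Set.mem_iUnion.mp hx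
    exact ⟨n, hxn⟩
  · rw [← DirectSum.sum_support_decompose 𝒜 a]
    exact sum_mem fun d _ => Submodule.subset_span <|
      Set.mem_iUnion.mpr ⟨d, h d ha, SetLike.coe_mem _⟩
  · rw [Submodule.span_le]
    intro x hx
    obtain ⟨n, hxN, -⟩ := Set.mem_iUnion.mp hx
    exact hxN

theorem gradedRadical_isHomogeneous : (gradedRadical 𝒜).IsHomogeneous 𝒜 :=
  Ideal.IsHomogeneous.sInf fun _ hN => isGradedSubmodule_iff_isHomogeneous.1 hN.1

theorem isMaxGradedSubmodule_comap_toSpanSingleton {P : Ideal A} (hP : P.IsHomogeneous 𝒜)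
    {w : A} {j : ℤ} (hw : w ∈ 𝒜 j) (hwP : w ∉ P)
    (hcov : ∀ Q : Ideal A, Q.IsHomogeneous 𝒜 → P < Q → Q ≤ P ⊔ Ideal.span {w} → w ∈ Q) :
    IsMaxGradedSubmodule 𝒜 (Submodule.comap (toSpanSingleton A A w) P) := by
  set C := Submodule.comap (toSpanSingleton A A w) P
  have hmemC (a : A) : a ∈ C ↔ a * w ∈ P := Iff.rfl
  refine ⟨isGradedSubmodule_iff_isHomogeneous.2 (hP.comap_toSpanSingleton hw),
    fun hC => hwP ?_, fun N hN hCN => ?_⟩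
  · simpa using (hmemC 1).1 (hC ▸ Submodule.mem_top)
  rw [isGradedSubmodule_iff_isHomogeneous] at hN
  obtain ⟨c, hcN, hcC⟩ := SetLike.exists_of_lt hCN
  have hPQ : P < P ⊔ Submodule.map (toSpanSingleton A A w) N :=
    lt_of_le_of_ne le_sup_left fun h =>
      hcC <| (hmemC c).2 <| h ▸ Submodule.mem_sup_right (Submodule.mem_map_of_mem hcN)
  have hQw : P ⊔ Submodule.map (toSpanSingleton A A w) N ≤ P ⊔ Ideal.span {w} := by
    rw [Ideal.span, LinearMap.span_singleton_eq_range]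
    exact sup_le_sup_left LinearMap.map_le_range P
  obtain ⟨p, hp, _, ⟨c', hc'N, rfl⟩, hsum⟩ :=
    Submodule.mem_sup.1 (hcov _ (hP.sup (hN.map_toSpanSingleton hw)) hPQ hQw)
  have hp' : p = w - c' * w := eq_sub_of_add_eq hsum
  have h1c' : 1 - c' ∈ C := by
    rw [hmemC, sub_mul, one_mul, ← hp']
    exact hp
  rw [Ideal.eq_top_iff_one]
  simpa using N.add_mem (hCN.le h1c') hc'N

theorem le_of_le_gradedRadical_mul_sup {I W : Ideal A} [IsNoetherian A (A ⧸ I)]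
    (hI : I.IsHomogeneous 𝒜) (hW : W.IsHomogeneous 𝒜) (hIW : I ≤ W)
    (h : W ≤ gradedRadical 𝒜 * W ⊔ I) : W ≤ I := by
  classical
  by_contra hWI
  obtain ⟨P, ⟨hIP, hP, hPW, hWP⟩, hPmax⟩ := exists_maximalFor_of_wellFoundedGT
    (fun Q : Ideal A => I ≤ Q ∧ Q.IsHomogeneous 𝒜 ∧ Q ≤ W ∧ ¬W ≤ Q) (Submodule.map I.mkQ)
    ⟨I, le_rfl, hI, hIW, hWI⟩
  have hcov (w : A) (hwW : w ∈ W) (Q : Ideal A) (hQ : Q.IsHomogeneous 𝒜) (hPQ : P < Q)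
      (hQw : Q ≤ P ⊔ Ideal.span {w}) : w ∈ Q := by
    by_contra hwQ
    have hIQ : I ≤ Q := hIP.trans hPQ.le
    have hQW : Q ≤ W := hQw.trans (sup_le hPW ((Ideal.span_singleton_le_iff_mem W).2 hwW))
    refine hPQ.not_ge ((Submodule.map_mkQ_le_map_mkQ_iff hIQ hIP).1 ?_)
    exact hPmax ⟨hIQ, hQ, hQW, fun h => hwQ (h hwW)⟩
      ((Submodule.map_mkQ_le_map_mkQ_iff hIP hIQ).2 hPQ.le)
  have hJW : gradedRadical 𝒜 * W ≤ P := by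
    refine Ideal.mul_le.2 fun r hr x hx => ?_
    rw [← DirectSum.sum_support_decompose 𝒜 x, Finset.mul_sum]
    refine sum_mem fun i _ => ?_
    by_cases hxP : (DirectSum.decompose 𝒜 x i : A) ∈ P
    · exact P.mul_mem_left r hxP
    · have hJ : gradedRadical 𝒜 ≤ Submodule.comap (toSpanSingleton A A _) P :=
        sInf_le (isMaxGradedSubmodule_comap_toSpanSingleton hP (SetLike.coe_mem _) hxP
          (hcov _ (hW i hx)))
      exact hJ hr
  exact hWP (h.trans (sup_le hJW hIP))

end GradedRadical

theorem exists_pow_sup_le_pow_succ_sup {A : Type*} [Ring A] (I J : Ideal A)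
    [IsArtinian A (A ⧸ I)] : ∃ n, J ^ (n + 1) ⊔ I ≤ J ^ (n + 2) ⊔ I := by
  obtain ⟨n, -, hn⟩ := exists_minimalFor_of_wellFoundedLT (fun _ : ℕ => True)
    (fun n => Submodule.map I.mkQ (J ^ (n + 1) ⊔ I)) ⟨0, trivial⟩
  have hle : J ^ (n + 2) ⊔ I ≤ J ^ (n + 1) ⊔ I :=
    sup_le_sup_right (Ideal.pow_le_pow_right (n + 1).le_succ) I
  refine ⟨n, (Submodule.map_mkQ_le_map_mkQ_iff le_sup_right le_sup_right).1 (hn trivial ?_)⟩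
  exact Submodule.map_mono hle

theorem finiteDimensional_quotient_span {k A : Type*} [Field k] [Ring A] [Algebra k A]
    {s : Set A} [(Ideal.span s).IsTwoSided] {T : Finset A}
    (hT : ∀ a : A, a ∈ Submodule.span k {x : A | ∃ c ∈ Algebra.adjoin k s, ∃ t ∈ T, x = c * t}) :
    FiniteDimensional k (A ⧸ Ideal.span s) := by
  classical
  set π := Ideal.Quotient.mkₐ k (Ideal.span s)
  have hadjoin : Algebra.adjoin k s ≤ (⊥ : Subalgebra k (A ⧸ Ideal.span s)).comap π :=
    Algebra.adjoin_le fun x hx => Algebra.mem_bot.2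
      ⟨0, by simp [π, Ideal.Quotient.eq_zero_iff_mem.2 (Ideal.subset_span hx)]⟩
  refine Module.finite_def.2 ⟨T.image π, eq_top_iff.2 fun q _ => ?_⟩
  obtain ⟨a, rfl⟩ := Ideal.Quotient.mkₐ_surjective k _ q
  have hπa := Submodule.mem_map_of_mem (f := π.toLinearMap) (hT a)
  rw [Submodule.map_span] at hπa
  refine Submodule.span_le.2 ?_ hπa
  rintro _ ⟨_, ⟨c, hc, t, ht, rfl⟩, rfl⟩
  obtain ⟨α, hα⟩ : ∃ α : k, algebraMap k _ α = π c := Algebra.mem_bot.1 (hadjoin hc)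
  rw [Finset.coe_image, AlgHom.toLinearMap_apply, map_mul, ← hα, ← Algebra.smul_def]
  exact Submodule.smul_mem _ α (Submodule.subset_span ⟨t, ht, rfl⟩)

theorem statement9_general {k V A : Type} [Field k]
    [AddCommGroup V] [Module k V]
    (gV : ℤ → Submodule k V) [DirectSum.Decomposition gV]
    [Ring A] [Algebra k A] (gA : ℤ → Submodule k A) [GradedAlgebra gA]
    (φ : V →ₗ[k] A)
    (hcentral : ∀ (v : V) (a : A), φ v * a = a * φ v)
    (hgraded : ∀ n : ℤ, ∀ v ∈ gV n, φ v ∈ gA n)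
    (hfin : ∃ s : Finset A, ∀ a : A,
      a ∈ Submodule.span k {x : A | ∃ c ∈ Algebra.adjoin k (Set.range ⇑φ), ∃ t ∈ s, x = c * t}) :
    ∃ m : ℕ, 1 ≤ m ∧
      (Submodule.restrictScalars k (gradedRadical gA)) ^ m ≤
        Submodule.restrictScalars k (Ideal.span (Set.range ⇑φ)) := by
  obtain ⟨T, hT⟩ := hfin
  set I := Ideal.span (Set.range φ)
  set J := gradedRadical gA
  have : I.IsTwoSided := Ideal.isTwoSided_span_of_subset_center <| by
    rintro _ ⟨v, rfl⟩
    exact Semigroup.mem_center_iff.2 fun a => (hcentral v a).symm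
  have : FiniteDimensional k (A ⧸ I) := finiteDimensional_quotient_span hT
  have : IsArtinian A (A ⧸ I) := isArtinian_of_tower k inferInstance
  have : IsNoetherian A (A ⧸ I) := isNoetherian_of_tower k inferInstance
  have hI : I.IsHomogeneous gA := Ideal.isHomogeneous_span_range hgraded
  obtain ⟨n, hn⟩ := exists_pow_sup_le_pow_succ_sup I J
  have hJn : J ^ (n + 1) ≤ I := le_sup_left.trans <|
    le_of_le_gradedRadical_mul_sup hI ((gradedRadical_isHomogeneous.pow _).sup hI) le_sup_right <|
      hn.trans <| by
        rw [show n + 2 = n + 1 + 1 from rfl, Submodule.pow_succ' J n.add_one_ne_zero, Ideal.mul_sup]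
        exact sup_le_sup_right le_sup_left I
  exact ⟨n + 1, le_add_self, (Ideal.restrictScalars_pow_le J _).trans
    (Submodule.restrictScalars_mono k hJn)⟩

/-- In the setup where `V` is a finite-dimensional graded `k`-vector
space in positive degrees and `A` is a ℤ-graded `k`-algebra which is a graded
`S(V)`-algebra (via the degree-preserving map `φ : V →ₗ[k] A` with central image),
finitely generated as an `S(V)`-module: there exists `m ≥ 1` such that
`(rad^gr(A))^m ⊆ V·A` (powers and products being taken as `k`-subspaces of `A`, and
`V·A = Ideal.span (range φ)` the ideal generated by the image of `V`). -/
theorem statement9 {k V A : Type} [Field k]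
    [AddCommGroup V] [Module k V] [FiniteDimensional k V]
    (gV : ℤ → Submodule k V) [DirectSum.Decomposition gV]
    (hVpos : ∀ n : ℤ, n ≤ 0 → gV n = ⊥)
    [Ring A] [Algebra k A] (gA : ℤ → Submodule k A) [GradedAlgebra gA]
    (φ : V →ₗ[k] A)
    (hcentral : ∀ (v : V) (a : A), φ v * a = a * φ v)
    (hgraded : ∀ n : ℤ, ∀ v ∈ gV n, φ v ∈ gA n)
    (hfin : ∃ s : Finset A, ∀ a : A,
      a ∈ Submodule.span k {x : A | ∃ c ∈ Algebra.adjoin k (Set.range ⇑φ), ∃ t ∈ s, x = c * t}) :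
    ∃ m : ℕ, 1 ≤ m ∧
      (Submodule.restrictScalars k (gradedRadical gA)) ^ m ≤
        Submodule.restrictScalars k (Ideal.span (Set.range ⇑φ)) :=
  statement9_general gV gA φ hcentral hgraded hfin
end
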